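/- Let (F_n) be a sequence of cumulative distribution functions on ℝ converging pointwise to a continuous cumulative distribution function F. Then F_n converges to F uniformly on ℝ (Pólya's lemma). -/

import Mathlib

/-!
Choose finitely many points at which `G` takes the values of a grid of mesh `η` in `(0, 1)`.
Pointwise convergence is uniform on this finite set, and monotonicity of `F n` and `G` traps
`F n x - G x` at every `x` between the errors at the neighbouring grid points, up to the mesh.
It suffices to bound `F n - G` from above: the reflection `H ↦ (x ↦ 1 - H (-x))` turns
distribution functions into distribution functions and `G - F n` into `F n - G`.
-/

open Filter Set Topology Function

theorem Ioo_subset_range_of_tendsto {G : ℝ → ℝ} (hG : Continuous G) {a b : ℝ}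
    (hbot : Tendsto G atBot (𝓝 a)) (htop : Tendsto G atTop (𝓝 b)) : Ioo a b ⊆ range G :=
  fun _ hv => mem_range_of_exists_le_of_exists_ge hG
    (hbot.eventually (eventually_le_nhds hv.1)).exists
    (htop.eventually (eventually_ge_nhds hv.2)).exists

theorem exists_finset_forall_lt_apply_le_add {G : ℝ → ℝ} (hG : Continuous G)
    (hbot : Tendsto G atBot (𝓝 0)) (htop : Tendsto G atTop (𝓝 1)) {η : ℝ} (hη : 0 < η) :
    ∃ S : Finset ℝ, ∀ v, 0 ≤ v → v < 1 - η → ∃ s ∈ S, v < G s ∧ G s ≤ v + η := by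
  refine ⟨(Finset.range ⌈1 / η⌉₊).image fun i : ℕ => invFun G (i * η), fun v hv0 hv1 => ?_⟩
  set i := ⌊v / η⌋₊ + 1
  have hvi : v < i * η := by
    have := Nat.lt_floor_add_one (v / η)
    push_cast [i]
    rwa [div_lt_iff₀ hη] at this
  have hiv : i * η ≤ v + η := by
    have := Nat.floor_le (div_nonneg hv0 hη.le)
    push_cast [i]
    rw [le_div_iff₀ hη] at this
    linarith
  have hGi : G (invFun G (i * η)) = i * η :=
    invFun_eq (Ioo_subset_range_of_tendsto hG hbot htop ⟨hv0.trans_lt hvi, by linarith⟩)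
  refine ⟨_, Finset.mem_image_of_mem _ (Finset.mem_range.2 ?_), by rw [hGi]; exact ⟨hvi, hiv⟩⟩
  have : (i : ℝ) < 1 / η := by rw [lt_div_iff₀ hη]; linarith
  exact_mod_cast this.trans_le (Nat.le_ceil _)

theorem Monotone.sub_lt_add_of_forall_exists_lt_le_add {α : Type*} [LinearOrder α]
    {f g : α → ℝ} (hf : Monotone f) (hg : Monotone g) {S : Set α} {b δ η : ℝ}
    (hfb : ∀ x, f x ≤ b) (hδ : 0 < δ) (hS : ∀ s ∈ S, f s - g s < δ)
    (hcover : ∀ x, g x < b - η → ∃ s ∈ S, g x < g s ∧ g s ≤ g x + η) (x : α) :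
    f x - g x < δ + η := by
  by_cases hx : g x < b - η
  · obtain ⟨s, hsS, hxs, hsx⟩ := hcover x hx
    have := hf (hg.reflect_lt hxs).le
    linarith [hS s hsS]
  · linarith [hfb x]

theorem eventually_forall_sub_lt {F : ℕ → ℝ → ℝ} {G : ℝ → ℝ}
    (hmono : ∀ n, Monotone (F n)) (hle : ∀ n x, F n x ≤ 1)
    (hGmono : Monotone G) (hGcont : Continuous G)
    (hGbot : Tendsto G atBot (𝓝 0)) (hGtop : Tendsto G atTop (𝓝 1))
    (hpt : ∀ x, Tendsto (fun n => F n x) atTop (𝓝 (G x))) :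
    ∀ ε > 0, ∀ᶠ n in atTop, ∀ x, F n x - G x < ε := by
  intro ε hε
  obtain ⟨S, hS⟩ := exists_finset_forall_lt_apply_le_add hGcont hGbot hGtop (half_pos hε)
  have hG0 (x : ℝ) : 0 ≤ G x :=
    le_of_tendsto hGbot (eventually_atBot.2 ⟨x, fun _ hy => hGmono hy⟩)
  have hgrid : ∀ᶠ n in atTop, ∀ s ∈ S, F n s - G s < ε / 2 :=
    (eventually_all_finset S).2 fun s _ =>
      ((hpt s).eventually (eventually_lt_nhds (lt_add_of_pos_right _ (half_pos hε)))).mono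
        fun _ h => sub_lt_iff_lt_add'.2 h
  filter_upwards [hgrid] with n hn x
  have := (hmono n).sub_lt_add_of_forall_exists_lt_le_add hGmono (hle n) (half_pos hε) hn
    (fun y hy => hS (G y) (hG0 y) hy) x
  linarith

theorem polya_lemma_general (F : ℕ → ℝ → ℝ) (G : ℝ → ℝ)
    (hmono : ∀ n, Monotone (F n))
    (hbot : ∀ n, Tendsto (F n) atBot (nhds 0))
    (htop : ∀ n, Tendsto (F n) atTop (nhds 1))
    (hGmono : Monotone G)
    (hGcont : Continuous G)
    (hGbot : Tendsto G atBot (nhds 0))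
    (hGtop : Tendsto G atTop (nhds 1))
    (hpt : ∀ x, Tendsto (fun n => F n x) atTop (nhds (G x))) :
    TendstoUniformly F G atTop := by
  have hF0 (n : ℕ) (x : ℝ) : 0 ≤ F n x :=
    le_of_tendsto (hbot n) (eventually_atBot.2 ⟨x, fun _ hy => hmono n hy⟩)
  have hF1 (n : ℕ) (x : ℝ) : F n x ≤ 1 :=
    ge_of_tendsto (htop n) (eventually_atTop.2 ⟨x, fun _ hy => hmono n hy⟩)
  have hupper := eventually_forall_sub_lt hmono hF1 hGmono hGcont hGbot hGtop hpt
  have hlower := eventually_forall_sub_lt (F := fun n x => 1 - F n (-x))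
    (G := fun x => 1 - G (-x))
    (fun n _ _ h => sub_le_sub_left (hmono n (neg_le_neg h)) 1)
    (fun n x => by linarith [hF0 n (-x)])
    (fun _ _ h => sub_le_sub_left (hGmono (neg_le_neg h)) 1)
    (by fun_prop)
    (by simpa using (hGtop.comp tendsto_neg_atBot_atTop).const_sub 1)
    (by simpa using (hGbot.comp tendsto_neg_atTop_atBot).const_sub 1)
    (fun x => (hpt (-x)).const_sub 1)
  rw [Metric.tendstoUniformly_iff]
  intro ε hε
  filter_upwards [hupper ε hε, hlower ε hε] with n hu hl x
  rw [Real.dist_eq, abs_sub_lt_iff]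
  exact ⟨by simpa using hl (-x), hu x⟩

/-- Pólya's lemma: a sequence of cumulative distribution functions converging pointwise
to a continuous cumulative distribution function converges uniformly on `ℝ`. -/
theorem polya_lemma (F : ℕ → ℝ → ℝ) (G : ℝ → ℝ)
    (hmono : ∀ n, Monotone (F n))
    (hrc : ∀ n x, ContinuousWithinAt (F n) (Set.Ici x) x)
    (hbot : ∀ n, Tendsto (F n) atBot (nhds 0))
    (htop : ∀ n, Tendsto (F n) atTop (nhds 1))
    (hGmono : Monotone G)
    (hGcont : Continuous G)
    (hGbot : Tendsto G atBot (nhds 0))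
    (hGtop : Tendsto G atTop (nhds 1))
    (hpt : ∀ x, Tendsto (fun n => F n x) atTop (nhds (G x))) :
    TendstoUniformly F G atTop :=
  polya_lemma_general F G hmono hbot htop hGmono hGcont hGbot hGtop hpt
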